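/- Writing ℤ^N = ℤ^d × ℤ^{N−d}, the set { E(φ(0 ⊕ m) + t) : m ∈ ℤ^{N−d}, t ∈ ker(h_σ) } equals E(h_σ⁻¹(Γ)) as subsets (indeed subgroups) of (ℂ^×)^I; that is, the group of multiplicative translations generated by the ℤ^{N−d}-action through φ and by E(ker(h_σ)) coincides with the exponential of the preimage of Γ under h_σ. -/

import Mathlib

/-!
Every point of `E(ker h_σ)` and of `E(φ(0 ⊕ ℤ^{N−d}))` already lies in `E(h_σ⁻¹(Γ))`, since
`h ∘ φ = h ∘ P_χ` and `P_χ` permutes `ℤ^N`. Conversely, let `x ∈ ℂ^I` with `h x = h n`,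
`n ∈ ℤ^N`. Splitting `n = a + P_χ m` with `a ∈ ℤ^N ∩ ℂ^Ĩ` and `m ∈ 0 ⊕ ℤ^{N−d}`, the vector
`x - a - φ m` lies in `ℂ^I ∩ ker h`, and `E x = E (x - a)` because `a` is integral.
-/

open Pointwise

/-- The coordinate subspace `ℂ^I ⊆ ℂ^N`: vectors supported on the index set `I`. -/
noncomputable def coordSubmodule (N : ℕ) (I : Set (Fin N)) : Submodule ℂ (Fin N → ℂ) where
  carrier := {x | ∀ i ∉ I, x i = 0}
  add_mem' := fun ha hb i hi => by simp [Pi.add_apply, ha i hi, hb i hi]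
  zero_mem' := fun i _ => rfl
  smul_mem' := fun c x hx i hi => by simp [Pi.smul_apply, hx i hi]

/-- The integer lattice `ℤ^N` as a subset of `ℂ^N`. -/
def intLattice (N : ℕ) : Set (Fin N → ℂ) :=
  {m | ∀ k, ∃ a : ℤ, m k = (a : ℂ)}

/-- `0 ⊕ ℤ^{N−d}`: the integer points of `ℂ^N` whose first `d` coordinates vanish. -/
def intLatticeLast (N d : ℕ) : Set (Fin N → ℂ) :=
  {m | (∀ k, ∃ a : ℤ, m k = (a : ℂ)) ∧ ∀ k : Fin N, (k : ℕ) < d → m k = 0}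

/-- The componentwise exponential `E(z)_i = exp(2πi z_i)`. -/
noncomputable def Emap (N : ℕ) (z : Fin N → ℂ) : Fin N → ℂ :=
  fun i => Complex.exp (2 * (Real.pi : ℂ) * Complex.I * z i)

lemma coordSubmodule_mono {N : ℕ} {I J : Set (Fin N)} (hIJ : I ⊆ J) :
    coordSubmodule N I ≤ coordSubmodule N J :=
  fun _ hx i hi => hx i fun hiI => hi (hIJ hiI)

lemma intLattice_comp_perm {N : ℕ} {n : Fin N → ℂ} (hn : n ∈ intLattice N)
    (σ : Equiv.Perm (Fin N)) : n ∘ σ ∈ intLattice N :=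
  fun k => hn (σ k)

lemma emap_add_of_mem_intLattice {N : ℕ} (z : Fin N → ℂ) {w : Fin N → ℂ}
    (hw : w ∈ intLattice N) : Emap N (z + w) = Emap N z := by
  funext i
  obtain ⟨a, ha⟩ := hw i
  have hper : Complex.exp (2 * (Real.pi : ℂ) * Complex.I * (a : ℂ)) = 1 := by
    rw [← Complex.exp_int_mul_two_pi_mul_I a]
    ring_nf
  simp only [Emap, Pi.add_apply, ha, mul_add, Complex.exp_add, hper, mul_one]

lemma LinearMap.apply_eq_apply_symm_of_map_single {R ι : Type*} [CommSemiring R] [Fintype ι]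
    [DecidableEq ι] {P : (ι → R) →ₗ[R] (ι → R)} {χ : Equiv.Perm ι}
    (hP : ∀ k, P (Pi.single k 1) = Pi.single (χ k) 1) (x : ι → R) (j : ι) :
    P x j = x (χ.symm j) := by
  have hfun : P = LinearMap.funLeft R R χ.symm := by
    refine (Pi.basisFun R ι).ext fun k => ?_
    ext j
    simp only [Pi.basisFun_apply, hP, LinearMap.funLeft_apply, Pi.single_apply,
      Equiv.symm_apply_eq]
  rw [hfun]
  rfl

lemma exists_add_comp_symm_of_mem_intLattice {N d : ℕ} {Itilde : Set (Fin N)}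
    {χ : Equiv.Perm (Fin N)} (hχ : ∀ k : Fin N, (k : ℕ) < d ↔ χ k ∈ Itilde)
    {n : Fin N → ℂ} (hn : n ∈ intLattice N) :
    ∃ a ∈ intLattice N, a ∈ coordSubmodule N Itilde ∧
      ∃ m ∈ intLatticeLast N d, n = a + m ∘ χ.symm := by
  classical
  set m : Fin N → ℂ := fun k => if (k : ℕ) < d then 0 else n (χ k)
  have hm : m ∈ intLatticeLast N d := by
    refine ⟨fun k => ?_, fun k hk => if_pos hk⟩
    by_cases hk : (k : ℕ) < d
    · exact ⟨0, by simp [m, hk]⟩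
    · simpa [m, hk] using hn (χ k)
  refine ⟨n - m ∘ χ.symm, fun j => ?_, fun j hj => ?_, m, hm, (sub_add_cancel n _).symm⟩
  · obtain ⟨b, hb⟩ := hm.1 (χ.symm j)
    obtain ⟨c, hc⟩ := hn j
    exact ⟨c - b, by simp [hb, hc]⟩
  · have hj' : ¬ ((χ.symm j : Fin N) : ℕ) < d := fun hlt => hj (by simpa using (hχ _).mp hlt)
    simp [m, hj']

theorem statement5_general {N d : ℕ}
    (h : (Fin N → ℂ) →ₗ[ℂ] (Fin d → ℂ))
    (I Itilde : Set (Fin N)) (hII : Itilde ⊆ I)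
    (ψ : (coordSubmodule N Itilde) ≃ₗ[ℂ] (Fin d → ℂ))
    (hψ : ∀ x : coordSubmodule N Itilde, ψ x = h (x : Fin N → ℂ))
    (χ : Equiv.Perm (Fin N)) (hχ : ∀ k : Fin N, (k : ℕ) < d ↔ χ k ∈ Itilde)
    (P : (Fin N → ℂ) →ₗ[ℂ] (Fin N → ℂ))
    (hP : ∀ k, P (Pi.single k 1) = Pi.single (χ k) 1)
    (φ : (Fin N → ℂ) →ₗ[ℂ] (Fin N → ℂ))
    (hφ : ∀ m, φ m = ((ψ.symm (h (P m)) : coordSubmodule N Itilde) : Fin N → ℂ)) :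
    Emap N '' ((⇑φ '' intLatticeLast N d) +
        ((coordSubmodule N I ⊓ LinearMap.ker h : Submodule ℂ (Fin N → ℂ)) : Set (Fin N → ℂ)))
      = Emap N '' {x : Fin N → ℂ | x ∈ coordSubmodule N I ∧ h x ∈ ⇑h '' intLattice N} := by
  have hPχ : ∀ m, P m = m ∘ χ.symm := fun m =>
    funext (LinearMap.apply_eq_apply_symm_of_map_single hP m)
  have hhφ : ∀ m, h (φ m) = h (P m) := fun m => by rw [hφ, ← hψ, LinearEquiv.apply_symm_apply]
  have hφI : ∀ m, φ m ∈ coordSubmodule N I := fun m =>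
    coordSubmodule_mono hII (by rw [hφ]; exact Submodule.coe_mem _)
  apply Set.Subset.antisymm
  · refine Set.image_mono ?_
    rintro _ ⟨_, ⟨m, hm, rfl⟩, t, ⟨htI, htker⟩, rfl⟩
    refine ⟨add_mem (hφI m) htI, P m, ?_, ?_⟩
    · rw [hPχ]
      exact intLattice_comp_perm hm.1 χ.symm
    · rw [map_add, LinearMap.mem_ker.mp htker, add_zero, hhφ]
  · rintro _ ⟨x, ⟨hxI, n, hn, hnx⟩, rfl⟩
    obtain ⟨a, haZ, haI, m, hm, rfl⟩ := exists_add_comp_symm_of_mem_intLattice hχ hn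
    have ht : x - a - φ m ∈ coordSubmodule N I ⊓ LinearMap.ker h := by
      refine ⟨sub_mem (sub_mem hxI (coordSubmodule_mono hII haI)) (hφI m),
        LinearMap.mem_ker.mpr ?_⟩
      rw [map_sub, map_sub, hhφ, ← hnx, map_add, ← hPχ]
      abel
    refine ⟨x - a, ⟨φ m, ⟨m, hm, rfl⟩, x - a - φ m, ht, add_sub_cancel _ _⟩, ?_⟩
    rw [← emap_add_of_mem_intLattice (x - a) haZ, sub_add_cancel]

/-- Writing `ℤ^N = ℤ^d × ℤ^{N−d}`, the set
`{E(φ(0 ⊕ m) + t) : m ∈ ℤ^{N−d}, t ∈ ker h_σ}` equals `E(h_σ⁻¹(Γ))`: the group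
of multiplicative translations generated by the `ℤ^{N−d}`-action through `φ` and by
`E(ker h_σ)` coincides with the exponential of the preimage of `Γ` under `h_σ`. -/
theorem statement5 {N d : ℕ} (hd : 1 ≤ d) (hdN : d ≤ N)
    (v : Fin N → (Fin d → ℂ)) (hreal : ∀ k i, (v k i).im = 0)
    (h : (Fin N → ℂ) →ₗ[ℂ] (Fin d → ℂ)) (hv : ∀ k, h (Pi.single k 1) = v k)
    (I Itilde : Set (Fin N)) (hII : Itilde ⊆ I)
    (hsurj : ∀ y : Fin d → ℂ, ∃ x ∈ coordSubmodule N I, h x = y)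
    (hli : LinearIndependent ℂ (fun i : Itilde => v i))
    (hspan : Submodule.span ℂ (Set.range (fun i : Itilde => v i)) = ⊤)
    (ψ : (coordSubmodule N Itilde) ≃ₗ[ℂ] (Fin d → ℂ))
    (hψ : ∀ x : coordSubmodule N Itilde, ψ x = h (x : Fin N → ℂ))
    (χ : Equiv.Perm (Fin N)) (hχ : ∀ k : Fin N, (k : ℕ) < d ↔ χ k ∈ Itilde)
    (P : (Fin N → ℂ) →ₗ[ℂ] (Fin N → ℂ))
    (hP : ∀ k, P (Pi.single k 1) = Pi.single (χ k) 1)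
    (φ : (Fin N → ℂ) →ₗ[ℂ] (Fin N → ℂ))
    (hφ : ∀ m, φ m = ((ψ.symm (h (P m)) : coordSubmodule N Itilde) : Fin N → ℂ)) :
    Emap N '' ((⇑φ '' intLatticeLast N d) +
        ((coordSubmodule N I ⊓ LinearMap.ker h : Submodule ℂ (Fin N → ℂ)) : Set (Fin N → ℂ)))
      = Emap N '' {x : Fin N → ℂ | x ∈ coordSubmodule N I ∧ h x ∈ ⇑h '' intLattice N} :=
  statement5_general h I Itilde hII ψ hψ χ hχ P hP φ hφ
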